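/- arXiv:1508.00064 — 7 statements merged into one kernel-verified Lean document; each statement's English description precedes it below -/
import Mathlib

section
/- Let t ∈ (0,1) and write w = s + I·θ with s, θ ∈ ℝ. Then H_t(w) = ((Real.log t)²·θ + |Real.log t|·(s² + θ²)) / ((Real.log t − θ)² + s²) whenever the denominator is nonzero. In particular, H_t(w) > 0 for every w with Im w > 0. -/
noncomputable section

open Complex

/-- The barrier function `H_t(w) = Im((log t)·w / ((log t) + I·w))`. -/
def Ht (t : ℝ) (w : ℂ) : ℝ :=
  (((Real.log t : ℂ) * w) / ((Real.log t : ℂ) + Complex.I * w)).im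

/-- Explicit formula for `H_t` in the coordinates `w = s + Iθ`, and positivity of
`H_t` on the upper half plane. -/
theorem Ht_formula_and_pos (t : ℝ) (ht : t ∈ Set.Ioo (0 : ℝ) 1) :
    (∀ s θ : ℝ, (Real.log t - θ) ^ 2 + s ^ 2 ≠ 0 →
      Ht t (s + Complex.I * θ) =
        ((Real.log t) ^ 2 * θ + |Real.log t| * (s ^ 2 + θ ^ 2)) /
          ((Real.log t - θ) ^ 2 + s ^ 2)) ∧
    ∀ w : ℂ, 0 < w.im → 0 < Ht t w := by
  obtain ⟨ht0, ht1⟩ := ht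
  have hL : Real.log t < 0 := Real.log_neg ht0 ht1
  set L := Real.log t with hLdef
  have habs : |L| = -L := abs_of_neg hL
  have key : ∀ s θ : ℝ, Ht t (s + Complex.I * θ) =
      (L ^ 2 * θ + |L| * (s ^ 2 + θ ^ 2)) / ((L - θ) ^ 2 + s ^ 2) := by
    intro s θ
    have hd : Complex.normSq ((L : ℂ) + Complex.I * (s + Complex.I * θ)) =
        (L - θ) ^ 2 + s ^ 2 := by
      simp [Complex.normSq_apply, Complex.add_re, Complex.add_im, Complex.mul_re,
        Complex.mul_im]
      ring
    simp only [Ht, Complex.div_im, hd, Complex.add_re, Complex.add_im, Complex.mul_re,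
      Complex.mul_im, Complex.I_re, Complex.I_im, Complex.ofReal_re, Complex.ofReal_im]
    rw [div_sub_div_same]
    congr 1
    rw [habs]; ring
  constructor
  · intro s θ _; exact key s θ
  · intro w hw
    have hwrw : (w.re : ℂ) + Complex.I * w.im = w := by
      rw [mul_comm]; exact Complex.re_add_im w
    rw [← hwrw, key]
    apply div_pos
    · rw [habs]
      nlinarith [sq_nonneg w.re, sq_nonneg w.im, mul_pos hw (neg_pos.2 hL), mul_pos (mul_pos (neg_pos.2 hL) (neg_pos.2 hL)) hw]
    · nlinarith [sq_nonneg w.re, sq_nonneg (L - w.im)]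
end
end

section
/- Let t ∈ (0,1) and let w ∈ ℂ satisfy Re w = Real.log t and Im w ≥ 0. Then H_t(w) ≥ |Real.log t|/2. (This is the statement that H_t(z) ≥ |log t|/2 on the circle |z| = t.) -/
noncomputable section

open Complex

/-! With `L = log t ≤ 0` and `y = Im w`, on the line `Re w = L` one has
`H_t(w) = |L|/2 + |L| y² / (2((L - y)² + L²))`, so the bound holds for every `y`. -/

/-- Both sides are `0` where the denominator vanishes. -/
theorem Ht_eq_div (t : ℝ) (w : ℂ) :
    Ht t w = Real.log t * (w.im * (Real.log t - w.im) - w.re ^ 2) /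
      ((Real.log t - w.im) ^ 2 + w.re ^ 2) := by
  simp only [Ht, div_im, mul_re, mul_im, add_re, add_im, ofReal_re, ofReal_im, I_re, I_im,
    normSq_apply]
  ring

theorem neg_div_two_le_mul_div_of_nonpos {L : ℝ} (hL : L ≤ 0) (y : ℝ) :
    -L / 2 ≤ L * (y * (L - y) - L ^ 2) / ((L - y) ^ 2 + L ^ 2) := by
  rcases hL.lt_or_eq with hL | rfl
  · have hD : 0 < (L - y) ^ 2 + L ^ 2 := by nlinarith [sq_nonneg (L - y)]
    rw [le_div_iff₀ hD]
    nlinarith [mul_nonneg (neg_nonneg.mpr hL.le) (sq_nonneg y)]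
  · simp

theorem Ht_ge_on_inner_circle_general (t : ℝ) (ht : t ∈ Set.Ioo (0 : ℝ) 1) (w : ℂ)
    (hre : w.re = Real.log t) :
    |Real.log t| / 2 ≤ Ht t w := by
  have hL : Real.log t ≤ 0 := Real.log_nonpos ht.1.le ht.2.le
  rw [abs_of_nonpos hL, Ht_eq_div, hre]
  exact neg_div_two_le_mul_div_of_nonpos hL w.im

/-- On the circle `|z| = t` (i.e. `Re w = log t`, `Im w ≥ 0`), the barrier satisfies
`H_t(w) ≥ |log t|/2`. -/
theorem Ht_ge_on_inner_circle (t : ℝ) (ht : t ∈ Set.Ioo (0 : ℝ) 1) (w : ℂ)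
    (hre : w.re = Real.log t) (him : 0 ≤ w.im) :
    |Real.log t| / 2 ≤ Ht t w :=
  Ht_ge_on_inner_circle_general t ht w hre
end
end

section
/- For every t ∈ (0,1) there exists Θ > 0 such that H_t(w) ≥ |Real.log t|/2 for every w ∈ ℂ with Real.log t ≤ Re w ≤ 0 and Im w ≥ Θ. (This is the statement that for fixed t, H_t(z) ≥ |log t|/2 as arg z → ∞, uniformly for t ≤ |z| ≤ 1.) -/
/-!
Writing `L = log t < 0`, the barrier is `H_t(w) = |L| (|w|² - L·Im w) / |L + I w|²`, and
`2 (|w|² - L·Im w) - |L + I w|² = |w|² - L²`. Hence `H_t(w) ≥ |L|/2` exactly when `|w| ≥ |L|`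
(away from the pole `w = I L`), which holds as soon as `Im w ≥ |L|`.
-/

noncomputable section

open Complex

namespace Complex

theorem im_ofReal_mul_div_ofReal_add_I_mul (L : ℝ) (w : ℂ) :
    ((L : ℂ) * w / (L + I * w)).im = -L * (normSq w - L * w.im) / normSq (L + I * w) := by
  simp only [div_im, mul_im, mul_re, add_re, add_im, I_re, I_im, ofReal_re, ofReal_im,
    normSq_apply]
  ring

theorem normSq_ofReal_add_I_mul (L : ℝ) (w : ℂ) :
    normSq (L + I * w) = normSq w - 2 * L * w.im + L ^ 2 := by
  simp only [normSq_apply, add_re, add_im, mul_re, mul_im, I_re, I_im, ofReal_re, ofReal_im]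
  ring

theorem abs_div_two_le_im_ofReal_mul_div_ofReal_add_I_mul {L : ℝ} (hL : L ≤ 0) {w : ℂ}
    (hpole : (L : ℂ) + I * w ≠ 0) (hw : |L| ≤ ‖w‖) :
    |L| / 2 ≤ ((L : ℂ) * w / (L + I * w)).im := by
  have hD : 0 < normSq (L + I * w) := normSq_pos.mpr hpole
  have hL2 : L ^ 2 ≤ normSq w := by
    rw [normSq_eq_norm_sq, ← sq_abs L]
    exact pow_le_pow_left₀ (abs_nonneg L) hw 2
  rw [im_ofReal_mul_div_ofReal_add_I_mul, le_div_iff₀ hD, abs_of_nonpos hL,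
    normSq_ofReal_add_I_mul]
  nlinarith [mul_nonneg (neg_nonneg.mpr hL) (sub_nonneg.mpr hL2)]

end Complex

/-- For fixed `t ∈ (0,1)`, we have `H_t(w) ≥ |log t|/2` as `Im w → ∞`, uniformly for
`log t ≤ Re w ≤ 0`. -/
theorem Ht_ge_for_large_arg (t : ℝ) (ht : t ∈ Set.Ioo (0 : ℝ) 1) :
    ∃ Θ : ℝ, 0 < Θ ∧ ∀ w : ℂ, Real.log t ≤ w.re → w.re ≤ 0 → Θ ≤ w.im →
      |Real.log t| / 2 ≤ Ht t w := by
  have hL : Real.log t < 0 := Real.log_neg ht.1 ht.2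
  refine ⟨|Real.log t|, abs_pos.mpr hL.ne, fun w _ _ hw => ?_⟩
  have hpole : (Real.log t : ℂ) + I * w ≠ 0 := by
    intro h
    have hre := congrArg re h
    simp only [add_re, mul_re, I_re, I_im, ofReal_re, zero_re, zero_mul, one_mul,
      zero_sub] at hre
    rw [abs_of_neg hL] at hw
    linarith
  exact abs_div_two_le_im_ofReal_mul_div_ofReal_add_I_mul hL.le hpole
    (hw.trans ((le_abs_self _).trans (abs_im_le_norm w)))
end
end

section
/- Let p ∈ ℂ with p ∉ (−∞, 0] (so p ≠ 0 and Complex.log is holomorphic in a neighborhood of p). Then there exists ε₀ > 0 such that for all ε with 0 < ε < ε₀: (1/(2πI)) · ∮_{C(p,ε)} ((1 − z²)/(4z²)) · (Complex.log z − Complex.log p)⁻² dz = −(1 + p²)/(4p). Equivalently, the residue of ((1−z²)/(4z²))·(log z − log p)⁻² at z = p equals −(1+p²)/(4p). -/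
/-!
With `h z = (1 - z²) / (4z)` and `φ z = log z - log p` we have `φ' z = z⁻¹`, so the integrand is
`h φ' / φ²`. Since `(h / φ)' = h' / φ - h φ' / φ²` and the integral of a derivative over a closed
circle vanishes, the integral equals `∮ h' / φ`. The function `φ` has a simple zero at `p` and no
other zero nearby, so this is `2πi h'(p) / φ'(p) = 2πi · (-(1 + p²) / (4p²)) · p`.
-/

open Complex Metric

theorem circleIntegral_mul_deriv_div_sq {U : Set ℂ} (hU : IsOpen U) {c : ℂ} {R : ℝ} (hR : 0 ≤ R)
    (hRU : sphere c R ⊆ U) {h φ : ℂ → ℂ} (hh : DifferentiableOn ℂ h U)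
    (hφ : DifferentiableOn ℂ φ U) (hφ0 : ∀ z ∈ sphere c R, φ z ≠ 0) :
    (∮ z in C(c, R), h z * deriv φ z / φ z ^ 2) = ∮ z in C(c, R), deriv h z / φ z := by
  have hφc : ContinuousOn φ (sphere c R) := hφ.continuousOn.mono hRU
  have hint₁ : CircleIntegrable (fun z => deriv h z / φ z) c R :=
    (((hh.deriv hU).continuousOn.mono hRU).div hφc hφ0).circleIntegrable hR
  have hint₂ : CircleIntegrable (fun z => h z * deriv φ z / φ z ^ 2) c R :=
    (((hh.continuousOn.mono hRU).mul ((hφ.deriv hU).continuousOn.mono hRU)).div (hφc.pow 2)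
      fun z hz => pow_ne_zero 2 (hφ0 z hz)).circleIntegrable hR
  have hquot : (∮ z in C(c, R), (deriv h z * φ z - h z * deriv φ z) / φ z ^ 2) = 0 :=
    circleIntegral.integral_eq_zero_of_hasDerivWithinAt hR fun z hz =>
      ((hh.differentiableAt (hU.mem_nhds (hRU hz))).hasDerivAt.div
        (hφ.differentiableAt (hU.mem_nhds (hRU hz))).hasDerivAt (hφ0 z hz)).hasDerivWithinAt
  refine (sub_eq_zero.mp ?_).symm
  rw [← circleIntegral.integral_sub hint₁ hint₂, ← hquot]
  refine circleIntegral.integral_congr hR fun z hz => ?_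
  field_simp [hφ0 z hz]

theorem circleIntegral_div_of_simple_zero {U : Set ℂ} (hU : IsOpen U) {c : ℂ} {R : ℝ}
    (hR : 0 < R) (hRU : closedBall c R ⊆ U) {h φ : ℂ → ℂ} (hh : DifferentiableOn ℂ h U)
    (hφ : DifferentiableOn ℂ φ U) (hφc : φ c = 0) (hφ'c : deriv φ c ≠ 0)
    (hφ0 : ∀ z ∈ closedBall c R, z ≠ c → φ z ≠ 0) :
    (∮ z in C(c, R), h z / φ z) = 2 * Real.pi * I * (h c / deriv φ c) := by
  have hq : DifferentiableOn ℂ (dslope φ c) U :=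
    (differentiableOn_dslope (hU.mem_nhds (hRU (mem_closedBall_self hR.le)))).mpr hφ
  have hq0 : ∀ z ∈ closedBall c R, dslope φ c z ≠ 0 := by
    intro z hz
    rcases eq_or_ne z c with rfl | hzc
    · rwa [dslope_same]
    · rw [dslope_of_ne _ hzc, slope_def_field, hφc, sub_zero]
      exact div_ne_zero (hφ0 z hz hzc) (sub_ne_zero.mpr hzc)
  have hcauchy := ((hh.mono hRU).div (hq.mono hRU) hq0).circleIntegral_sub_inv_smul
    (mem_ball_self hR)
  simp only [Pi.div_apply, dslope_same, smul_eq_mul] at hcauchy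
  rw [← hcauchy]
  refine circleIntegral.integral_congr hR.le fun z _ => ?_
  have hfactor : φ z = (z - c) * dslope φ c z := by
    rw [← smul_eq_mul, sub_smul_dslope, hφc, sub_zero]
  rw [hfactor, mul_comm (z - c), ← div_div, div_eq_inv_mul]

theorem circleIntegral_mul_deriv_div_sq_of_simple_zero {U : Set ℂ} (hU : IsOpen U) {c : ℂ}
    {R : ℝ} (hR : 0 < R) (hRU : closedBall c R ⊆ U) {h φ : ℂ → ℂ} (hh : DifferentiableOn ℂ h U)
    (hφ : DifferentiableOn ℂ φ U) (hφc : φ c = 0) (hφ'c : deriv φ c ≠ 0)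
    (hφ0 : ∀ z ∈ closedBall c R, z ≠ c → φ z ≠ 0) :
    (∮ z in C(c, R), h z * deriv φ z / φ z ^ 2) = 2 * Real.pi * I * (deriv h c / deriv φ c) := by
  rw [circleIntegral_mul_deriv_div_sq hU hR.le (sphere_subset_closedBall.trans hRU) hh hφ
    fun z hz => hφ0 z (sphere_subset_closedBall hz) (ne_of_mem_sphere hz hR.ne')]
  exact circleIntegral_div_of_simple_zero hU hR hRU (hh.deriv hU) hφ hφc hφ'c hφ0

theorem Complex.log_injOn_ne_zero : Set.InjOn log {0}ᶜ := fun z hz w hw hzw => by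
  rw [← exp_log hz, ← exp_log hw, hzw]

theorem hasDerivAt_one_sub_sq_div_four_mul {z : ℂ} (hz : z ≠ 0) :
    HasDerivAt (fun w => (1 - w ^ 2) / (4 * w)) (-(1 + z ^ 2) / (4 * z ^ 2)) z := by
  refine (((hasDerivAt_pow 2 z).const_sub 1).div ((hasDerivAt_id' z).const_mul 4)
    (mul_ne_zero (by norm_num) hz)).congr_deriv ?_
  field_simp
  ring

/-- The residue of `((1−z²)/(4z²))·(log z − log p)⁻²` at `z = p` equals
`−(1+p²)/(4p)`: for all sufficiently small `ε > 0`,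
`(1/(2πI)) ∮_{C(p,ε)} ((1−z²)/(4z²))·(log z − log p)⁻² dz = −(1+p²)/(4p)`. -/
theorem residue_log_sub_log_sq (p : ℂ) (hp : p ∈ Complex.slitPlane) :
    ∃ ε₀ : ℝ, 0 < ε₀ ∧ ∀ ε : ℝ, 0 < ε → ε < ε₀ →
      (1 / (2 * Real.pi * Complex.I)) *
        (∮ z in C(p, ε),
          ((1 - z ^ 2) / (4 * z ^ 2)) * ((Complex.log z - Complex.log p) ^ 2)⁻¹) =
        -(1 + p ^ 2) / (4 * p) := by
  obtain ⟨ε₀, hε₀, hball⟩ := isOpen_iff.mp isOpen_slitPlane p hp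
  refine ⟨ε₀, hε₀, fun ε hε hεε₀ => ?_⟩
  have hsub : closedBall p ε ⊆ slitPlane := (closedBall_subset_ball hεε₀).trans hball
  have hp0 : p ≠ 0 := slitPlane_ne_zero hp
  set φ : ℂ → ℂ := fun z => log z - log p
  have hφ' : ∀ z ∈ slitPlane, HasDerivAt φ z⁻¹ z := fun z hz => (hasDerivAt_log hz).sub_const _
  have hres := circleIntegral_mul_deriv_div_sq_of_simple_zero isOpen_slitPlane hε hsub
    (fun z hz => (hasDerivAt_one_sub_sq_div_four_mul (slitPlane_ne_zero hz)).differentiableAt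
      |>.differentiableWithinAt)
    (fun z hz => (hφ' z hz).differentiableAt.differentiableWithinAt) (sub_self _)
    (by rw [(hφ' p hp).deriv]; exact inv_ne_zero hp0)
    fun z hz hzp => sub_ne_zero.mpr fun hlog =>
      hzp (log_injOn_ne_zero (slitPlane_ne_zero (hsub hz)) hp0 hlog)
  rw [(hasDerivAt_one_sub_sq_div_four_mul hp0).deriv, (hφ' p hp).deriv] at hres
  have hintegrand : ∀ z ∈ sphere p ε,
      (1 - z ^ 2) / (4 * z ^ 2) * (φ z ^ 2)⁻¹ = (1 - z ^ 2) / (4 * z) * deriv φ z / φ z ^ 2 :=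
    fun z hz => by
    have hz := hsub (sphere_subset_closedBall hz)
    rw [(hφ' z hz).deriv]
    field_simp [slitPlane_ne_zero hz]
  rw [circleIntegral.integral_congr hε.le hintegrand, hres]
  field_simp [Real.pi_ne_zero, I_ne_zero]
end

section
/- Let p ∈ ℂ, r > 0, and let u be a real-valued continuously differentiable function on an open set containing the circle {z : |z − p| = r}. Define the Wirtinger derivative ∂u/∂z = (1/2)(∂u/∂x − I·∂u/∂y), where x = Re z and y = Im z. Then Re ∮_{C(p,r)} (∂u/∂z)(z) dz = 0. (Hence, in the Laurent-type decomposition of g = ∂u/∂z, the coefficients a_{i,1} — the residues of g on the inner circles — are real.) -/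
/-!
For every direction `w`, `Re (w · ∂u/∂z) = (1/2) du(w)`. Along `z = p + r e^{iθ}` the real
part of `(∂u/∂z) dz` is therefore half the derivative of `θ ↦ u (p + r e^{iθ})`, whose
integral over a period vanishes.
-/

noncomputable section

open Complex

/-- The Wirtinger derivative `∂u/∂z = (1/2)(∂u/∂x − I·∂u/∂y)` of a real-valued
function `u` on `ℂ`, as a complex number. -/
def wirtinger (u : ℂ → ℝ) (z : ℂ) : ℂ :=
  (1 / 2 : ℂ) * ((fderiv ℝ u z 1 : ℝ) - Complex.I * ((fderiv ℝ u z Complex.I : ℝ) : ℂ))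

open Metric Real

theorem Complex.map_eq_re_smul_add_im_smul {F M : Type*} [AddCommGroup M] [Module ℝ M]
    [FunLike F ℂ M] [LinearMapClass F ℝ ℂ M] (L : F) (w : ℂ) :
    L w = w.re • L 1 + w.im • L I := by
  conv_lhs => rw [← re_add_im w, ← mul_one (w.re : ℂ), ← real_smul, ← real_smul]
  rw [map_add, map_smul, map_smul]

theorem re_mul_wirtinger (u : ℂ → ℝ) (z w : ℂ) :
    (w * wirtinger u z).re = fderiv ℝ u z w / 2 := by
  rw [map_eq_re_smul_add_im_smul (fderiv ℝ u z) w]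
  simp only [wirtinger, smul_eq_mul, mul_re, mul_im, sub_re, sub_im, ofReal_re, ofReal_im,
    I_re, I_im, div_ofNat_re, div_ofNat_im, one_re, one_im]
  ring

theorem continuousOn_wirtinger {u : ℂ → ℝ} {U : Set ℂ} (hU : IsOpen U)
    (hu : ContDiffOn ℝ 1 u U) :
    ContinuousOn (wirtinger u) U := by
  have hDu := hu.continuousOn_fderiv_of_isOpen hU le_rfl
  unfold wirtinger
  fun_prop

theorem re_circleIntegral {f : ℂ → ℂ} {c : ℂ} {R : ℝ} (hf : CircleIntegrable f c R) :
    (∮ z in C(c, R), f z).re =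
      ∫ θ in 0..2 * π, (deriv (circleMap c R) θ * f (circleMap c R θ)).re :=
  (intervalIntegral.intervalIntegral_re hf.out).symm

theorem intervalIntegral_fderiv_circleMap_eq_zero {E : Type*} [NormedAddCommGroup E]
    [NormedSpace ℝ E] [CompleteSpace E] {u : ℂ → E} {U : Set ℂ} {c : ℂ} {R : ℝ}
    (hR : 0 ≤ R) (hU : IsOpen U) (hsub : sphere c R ⊆ U) (hu : ContDiffOn ℝ 1 u U) :
    ∫ θ in 0..2 * π, fderiv ℝ u (circleMap c R θ) (deriv (circleMap c R) θ) = 0 := by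
  have hmem (θ : ℝ) : circleMap c R θ ∈ U := hsub (circleMap_mem_sphere c hR θ)
  have hderiv (θ : ℝ) : HasDerivAt (u ∘ circleMap c R)
      (fderiv ℝ u (circleMap c R θ) (deriv (circleMap c R) θ)) θ :=
    ((hu.differentiableOn one_ne_zero).differentiableAt
      (hU.mem_nhds (hmem θ))).hasFDerivAt.comp_hasDerivAt θ
        (differentiable_circleMap c R θ).hasDerivAt
  have hcont : Continuous fun θ => fderiv ℝ u (circleMap c R θ) (deriv (circleMap c R) θ) := by
    have hDu := (hu.continuousOn_fderiv_of_isOpen hU le_rfl).comp_continuous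
      (continuous_circleMap c R) hmem
    simp only [deriv_circleMap]
    exact hDu.clm_apply (by fun_prop)
  rw [intervalIntegral.integral_eq_sub_of_hasDerivAt (fun θ _ => hderiv θ)
    (hcont.intervalIntegrable _ _)]
  exact sub_eq_zero.2 ((periodic_circleMap c R).comp u).eq

/-- For a real-valued `C¹` function `u` defined near the circle `|z − p| = r`,
the real part of `∮_{C(p,r)} (∂u/∂z) dz` vanishes. -/
theorem re_circleIntegral_wirtinger_eq_zero (p : ℂ) (r : ℝ) (hr : 0 < r)
    (u : ℂ → ℝ) (U : Set ℂ) (hU : IsOpen U) (hsub : Metric.sphere p r ⊆ U)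
    (hu : ContDiffOn ℝ 1 u U) :
    (∮ z in C(p, r), wirtinger u z).re = 0 := by
  have hint : CircleIntegrable (wirtinger u) p r :=
    ((continuousOn_wirtinger hU hu).mono hsub).circleIntegrable hr.le
  calc (∮ z in C(p, r), wirtinger u z).re
      = ∫ θ in 0..2 * π, fderiv ℝ u (circleMap p r θ) (deriv (circleMap p r) θ) / 2 := by
        simp only [re_circleIntegral hint, re_mul_wirtinger]
    _ = 0 := by
        rw [intervalIntegral.integral_div,
          intervalIntegral_fderiv_circleMap_eq_zero hr.le hU hsub hu, zero_div]
end
end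

section
/- Let m ≥ 1, let c₁, …, c_m be real numbers, and let y₁, …, y_m be distinct real numbers. Define F(z) = −Σ_{i=1}^m c_i/(2(z − I·y_i)) for z ∈ ℂ ∖ {I·y₁, …, I·y_m}. Then for every ε with 0 < ε < min_{i≥2} |y₁ − y_i|: −Re ∮_{C(I·y₁, ε)} F(z)² dz = −π · Σ_{i=2}^m c₁·c_i/(y₁ − y_i). -/
/-!
Write `F(z) = -((c₁ / 2) / (z - I y₁) + S(z))`, where `S` collects the poles `I yᵢ`, `i ≥ 2`, all
outside the closed disc of radius `ε`, so `S` is holomorphic there. In `F²` the double pole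
integrates to zero and so does `S²` (Cauchy–Goursat); by Cauchy's formula the cross term
`c₁ S(z) / (z - I y₁)` contributes `2πi c₁ S(I y₁) = π Σᵢ c₁ cᵢ / (y₁ - yᵢ)`, a real number.
-/

open Complex Metric Set Finset Real

namespace Complex

theorem circleIntegral_div_sub_add_sq {a b : ℂ} {R : ℝ} {g : ℂ → ℂ} (hR : 0 < R)
    (hg : DifferentiableOn ℂ g (closedBall a R)) :
    (∮ z in C(a, R), (b / (z - a) + g z) ^ 2) = 2 * π * I * (2 * b * g a) := by
  have hne : ∀ z ∈ sphere a R, z - a ≠ 0 := fun z hz => sub_ne_zero.2 (ne_of_mem_sphere hz hR.ne')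
  have hexpand : EqOn (fun z => (b / (z - a) + g z) ^ 2)
      (fun z => b ^ 2 * (z - a) ^ (-2 : ℤ) + (z - a)⁻¹ • (2 * b * g z) + g z ^ 2) (sphere a R) := by
    intro z hz
    have := hne z hz
    simp only [smul_eq_mul, zpow_neg, zpow_two]
    field_simp
    ring
  have hg_sphere : ContinuousOn g (sphere a R) := hg.continuousOn.mono sphere_subset_closedBall
  have h_sq_pole : CircleIntegrable (fun z => b ^ 2 * (z - a) ^ (-2 : ℤ)) a R :=
    (continuousOn_const.mul <| (continuousOn_id.sub continuousOn_const).zpow₀ _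
      fun z hz => Or.inl (hne z hz)).circleIntegrable hR.le
  have h_pole : CircleIntegrable (fun z => (z - a)⁻¹ • (2 * b * g z)) a R :=
    (((continuousOn_id.sub continuousOn_const).inv₀ hne).smul
      (continuousOn_const.mul hg_sphere)).circleIntegrable hR.le
  have h_regular : CircleIntegrable (fun z => g z ^ 2) a R :=
    (hg_sphere.pow 2).circleIntegrable hR.le
  rw [circleIntegral.integral_congr hR.le hexpand,
    circleIntegral.integral_add
      (f := fun z => b ^ 2 * (z - a) ^ (-2 : ℤ) + (z - a)⁻¹ • (2 * b * g z))
      (h_sq_pole.add h_pole) h_regular,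
    circleIntegral.integral_add h_sq_pole h_pole, circleIntegral.integral_const_mul,
    circleIntegral.integral_sub_zpow_of_ne (by decide),
    (hg.const_mul (2 * b)).circleIntegral_sub_inv_smul (mem_ball_self hR),
    ((hg.fun_pow 2).mono closure_ball_subset_closedBall).diffContOnCl.circleIntegral_eq_zero hR.le]
  simp

theorem I_mul_ofReal_notMem_closedBall {x x' ε : ℝ} (h : ε < |x - x'|) :
    I * (x' : ℂ) ∉ closedBall (I * (x : ℂ)) ε := by
  rwa [mem_closedBall, Complex.dist_eq, ← mul_sub, norm_mul, norm_I, one_mul, ← ofReal_sub,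
    norm_real, Real.norm_eq_abs, abs_sub_comm, not_le]

theorem differentiableOn_sum_div_two_mul_sub {ι : Type*} (s : Finset ι) (c p : ι → ℂ) {U : Set ℂ}
    (hp : ∀ j ∈ s, p j ∉ U) :
    DifferentiableOn ℂ (fun z => ∑ j ∈ s, c j / (2 * (z - p j))) U :=
  DifferentiableOn.fun_sum fun j hj => (differentiableOn_const _).div
    ((differentiableOn_const _).mul (differentiableOn_id.sub (differentiableOn_const _)))
    fun _ hz => mul_ne_zero two_ne_zero (sub_ne_zero.2 fun h => hp j hj (h ▸ hz))

theorem two_pi_I_mul_div_two_mul_I_mul_sub (b x x' : ℂ) :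
    2 * π * I * (b / (2 * (I * x - I * x'))) = π * (b / (x - x')) := by
  rcases eq_or_ne x x' with rfl | hx
  · simp
  have : x - x' ≠ 0 := sub_ne_zero.2 hx
  rw [← mul_sub]
  field_simp

end Complex

theorem force_simple_poles_general (m : ℕ) (hm : 0 < m) (c : Fin m → ℝ) (y : Fin m → ℝ)
    (ε : ℝ) (hε : 0 < ε)
    (hε' : ∀ i : Fin m, i ≠ ⟨0, hm⟩ → ε < |y ⟨0, hm⟩ - y i|) :
    -(∮ z in C(Complex.I * (y ⟨0, hm⟩ : ℂ), ε),
        (-(∑ i, (c i : ℂ) / (2 * (z - Complex.I * (y i : ℂ))))) ^ 2).re =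
      -Real.pi * ∑ i ∈ Finset.univ.erase (⟨0, hm⟩ : Fin m),
        c ⟨0, hm⟩ * c i / (y ⟨0, hm⟩ - y i) := by
  set i₀ : Fin m := ⟨0, hm⟩
  set S : ℂ → ℂ := fun z => ∑ j ∈ univ.erase i₀, (c j : ℂ) / (2 * (z - I * (y j : ℂ)))
  have hsplit : ∀ z : ℂ, (-(∑ i, (c i : ℂ) / (2 * (z - I * (y i : ℂ))))) ^ 2 =
      ((c i₀ : ℂ) / 2 / (z - I * (y i₀ : ℂ)) + S z) ^ 2 := fun z => by
    rw [← add_sum_erase _ _ (mem_univ i₀), neg_sq, div_div]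
  have hS : DifferentiableOn ℂ S (closedBall (I * (y i₀ : ℂ)) ε) :=
    differentiableOn_sum_div_two_mul_sub _ _ _ fun j hj =>
      I_mul_ofReal_notMem_closedBall (hε' j (ne_of_mem_erase hj))
  rw [circleIntegral.integral_congr hε.le fun z _ => hsplit z,
    circleIntegral_div_sub_add_sq hε hS]
  have hresidue : 2 * π * I * (2 * ((c i₀ : ℂ) / 2) * S (I * (y i₀ : ℂ))) =
      ((π * ∑ j ∈ univ.erase i₀, c i₀ * c j / (y i₀ - y j) : ℝ) : ℂ) := by
    simp only [S, mul_div_cancel₀ _ (two_ne_zero' ℂ), mul_sum]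
    push_cast
    refine sum_congr rfl fun j _ => ?_
    rw [← mul_div_assoc, two_pi_I_mul_div_two_mul_I_mul_sub]
  rw [hresidue, ofReal_re]
  ring

/-- The flux computation for `F(z) = −Σᵢ cᵢ/(2(z − I·yᵢ))` at the point `I·y₁`:
for `0 < ε < minᵢ₌₂ |y₁ − yᵢ|`,
`−Re ∮_{C(I·y₁,ε)} F(z)² dz = −π Σᵢ₌₂ c₁cᵢ/(y₁ − yᵢ)`. -/
theorem force_simple_poles (m : ℕ) (hm : 0 < m) (c : Fin m → ℝ) (y : Fin m → ℝ)
    (hy : Function.Injective y) (ε : ℝ) (hε : 0 < ε)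
    (hε' : ∀ i : Fin m, i ≠ ⟨0, hm⟩ → ε < |y ⟨0, hm⟩ - y i|) :
    -(∮ z in C(Complex.I * (y ⟨0, hm⟩ : ℂ), ε),
        (-(∑ i, (c i : ℂ) / (2 * (z - Complex.I * (y i : ℂ))))) ^ 2).re =
      -Real.pi * ∑ i ∈ Finset.univ.erase (⟨0, hm⟩ : Fin m),
        c ⟨0, hm⟩ * c i / (y ⟨0, hm⟩ - y i) :=
  force_simple_poles_general m hm c y ε hε hε'
end

section
/- Let p ∈ ℂ with Im p > 0, and define h_p(z) = −log| (Complex.log z − Complex.log p) / (Complex.log z − Complex.log (conj p)) | for z in the upper half plane {Im z > 0} with z ≠ p. Then: (1) h_p is harmonic on {z : Im z > 0} ∖ {p}; and (2) h_p(z) > 0 for every z with Im z > 0 and z ≠ p; equivalently, |Complex.log z − Complex.log p| < |Complex.log z − Complex.log (conj p)| for all such z. -/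
noncomputable section

open Complex

/-- The Laplacian of a real-valued function on `ℂ ≅ ℝ²`, computed in the real
coordinates `(Re z, Im z)`. -/
def laplacian (u : ℂ → ℝ) (w : ℂ) : ℝ :=
  fderiv ℝ (fun z => fderiv ℝ u z 1) w 1 +
    fderiv ℝ (fun z => fderiv ℝ u z Complex.I) w Complex.I

/-- The Green's-type function
`h_p(z) = −log|(log z − log p)/(log z − log conj p)|`. -/
def greenH (p : ℂ) (z : ℂ) : ℝ :=
  -Real.log ‖
    ((Complex.log z - Complex.log p) / (Complex.log z - Complex.log ((starRingEnd ℂ) p)))‖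

/-!
Write `h_p = -log ‖g‖` with `g = (log - log p) / (log - conj (log p))`, using
`log (conj p) = conj (log p)`. On the punctured upper half plane `g` is holomorphic and has no
zeros, so `log ‖g‖` is harmonic. Since `log` maps the upper half plane into itself, `log z` is
strictly closer to `log p` than to its mirror image `conj (log p)`, i.e. `‖g z‖ < 1`.
-/

open ComplexConjugate InnerProductSpace
open scoped Laplacian

theorem fderiv_fderiv_apply_const {𝕜 E F : Type*} [NontriviallyNormedField 𝕜]
    [NormedAddCommGroup E] [NormedSpace 𝕜 E] [NormedAddCommGroup F] [NormedSpace 𝕜 F]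
    {f : E → F} {x : E} (hf : DifferentiableAt 𝕜 (fderiv 𝕜 f) x) (v w : E) :
    fderiv 𝕜 (fun y => fderiv 𝕜 f y v) x w = fderiv 𝕜 (fderiv 𝕜 f) x w v := by
  rw [fderiv_clm_apply hf (differentiableAt_const v)]
  simp

theorem ContDiffAt.laplacian_eq {u : ℂ → ℝ} {z : ℂ} (hu : ContDiffAt ℝ 2 u z) :
    laplacian u z = Δ u z := by
  have hd : DifferentiableAt ℝ (fderiv ℝ u) z :=
    (hu.fderiv_right (m := 1) (by norm_num)).differentiableAt one_ne_zero
  simp only [laplacian_eq_iteratedFDeriv_complexPlane, laplacian, iteratedFDeriv_two_apply,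
    fderiv_fderiv_apply_const hd]
  rfl

theorem InnerProductSpace.HarmonicAt.laplacian_eq_zero {u : ℂ → ℝ} {z : ℂ}
    (hu : HarmonicAt u z) : laplacian u z = 0 := by
  rw [hu.1.laplacian_eq]
  exact hu.2.eq_of_nhds

namespace Complex

theorem arg_pos_of_im_pos {z : ℂ} (hz : 0 < z.im) : 0 < z.arg :=
  (arg_nonneg_iff.2 hz.le).lt_of_ne fun h => hz.ne' (arg_eq_zero_iff.1 h.symm).2

theorem norm_sub_lt_norm_sub_conj {a b : ℂ} (ha : 0 < a.im) (hb : 0 < b.im) :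
    ‖a - b‖ < ‖a - conj b‖ := by
  refine lt_of_pow_lt_pow_left₀ 2 (norm_nonneg _) ?_
  rw [Complex.sq_norm, Complex.sq_norm, normSq_apply, normSq_apply]
  simp only [sub_re, sub_im, conj_re, conj_im]
  nlinarith [mul_pos ha hb]

theorem norm_log_sub_log_lt_norm_log_sub_log_conj {z p : ℂ} (hz : 0 < z.im) (hp : 0 < p.im) :
    ‖log z - log p‖ < ‖log z - log (conj p)‖ := by
  rw [log_conj p (slitPlane_arg_ne_pi (mem_slitPlane_iff.2 (Or.inr hp.ne')))]
  exact norm_sub_lt_norm_sub_conj ((log_im z).symm ▸ arg_pos_of_im_pos hz)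
    ((log_im p).symm ▸ arg_pos_of_im_pos hp)

theorem log_sub_log_ne_zero {z p : ℂ} (hz : z ≠ 0) (hp : p ≠ 0) (hzp : z ≠ p) :
    log z - log p ≠ 0 := fun h =>
  hzp <| by rw [← exp_log hz, ← exp_log hp, sub_eq_zero.1 h]

end Complex

theorem harmonicAt_greenH {p z : ℂ} (hp : 0 < p.im) (hz : 0 < z.im) (hzp : z ≠ p) :
    HarmonicAt (greenH p) z := by
  have hnum : log z - log p ≠ 0 :=
    log_sub_log_ne_zero (ne_of_apply_ne im hz.ne') (ne_of_apply_ne im hp.ne') hzp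
  have hden : log z - log (conj p) ≠ 0 :=
    norm_pos_iff.1 ((norm_nonneg _).trans_lt (norm_log_sub_log_lt_norm_log_sub_log_conj hz hp))
  have hlog : AnalyticAt ℂ log z := analyticAt_clog (mem_slitPlane_iff.2 (Or.inr hz.ne'))
  exact (((hlog.sub analyticAt_const).div (hlog.sub analyticAt_const) hden).harmonicAt_log_norm
    (div_ne_zero hnum hden)).neg

theorem greenH_pos {p z : ℂ} (hp : 0 < p.im) (hz : 0 < z.im) (hzp : z ≠ p) : 0 < greenH p z := by
  have hlt := norm_log_sub_log_lt_norm_log_sub_log_conj hz hp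
  have hnum : 0 < ‖log z - log p‖ := norm_pos_iff.2 <|
    log_sub_log_ne_zero (ne_of_apply_ne im hz.ne') (ne_of_apply_ne im hp.ne') hzp
  rw [greenH, norm_div, neg_pos]
  exact Real.log_neg (div_pos hnum (hnum.trans hlt)) ((div_lt_one (hnum.trans hlt)).2 hlt)

/-- For `p` in the upper half plane, `h_p` is harmonic on the punctured upper half
plane and positive there; equivalently `|log z − log p| < |log z − log (conj p)|`. -/
theorem greenH_harmonic_pos (p : ℂ) (hp : 0 < p.im) :
    (ContDiffOn ℝ 2 (greenH p) ({z : ℂ | 0 < z.im} \ {p}) ∧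
      ∀ z ∈ {z : ℂ | 0 < z.im} \ {p}, laplacian (greenH p) z = 0) ∧
    ∀ z : ℂ, 0 < z.im → z ≠ p →
      0 < greenH p z ∧
      ‖Complex.log z - Complex.log p‖ <
        ‖Complex.log z - Complex.log ((starRingEnd ℂ) p)‖ := by
  have harmonic : HarmonicOnNhd (greenH p) ({z : ℂ | 0 < z.im} \ {p}) :=
    fun z hz => harmonicAt_greenH hp hz.1 hz.2
  exact ⟨⟨harmonic.contDiffOn, fun z hz => (harmonic z hz).laplacian_eq_zero⟩,
    fun z hz hzp => ⟨greenH_pos hp hz hzp, norm_log_sub_log_lt_norm_log_sub_log_conj hz hp⟩⟩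
end
end
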